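/- If n is an even positive integer, then the fixed subspace {f : ZMod n → ℂ | λ_t f = f for all t ∈ ZMod n} of the regular representation of the dihedral quandle R_n equals the two-dimensional ℂ-span of the constant function f_0 and the sign character f_{n/2} (f_{n/2}(x) = (−1)^{x.val}). -/
import Mathlib


/-- The regular representation of the dihedral quandle `R_n = Quandle.dihedral n`
(`ZMod n` with `x ◃ y = 2y - x`) on functions `ZMod n → ℂ`:
`(λ_t f)(x) = f (2t - x)`. -/
def lam (n : ℕ) (t : ZMod n) (f : ZMod n → ℂ) : ZMod n → ℂ :=
  fun x => f (2 * t - x)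

/-- `ω = exp(2πi/n)`. -/
noncomputable def dihedralOmega (n : ℕ) : ℂ :=
  Complex.exp (2 * Real.pi * Complex.I / n)

/-- The character `f_s : ZMod n → ℂ`, `f_s(x) = ω^{s·x.val}`. -/
noncomputable def chi (n : ℕ) (s : ℤ) : ZMod n → ℂ :=
  fun x => dihedralOmega n ^ (s * (x.val : ℤ))

/-- `V_s`: the `ℂ`-linear span of `{f_s, f_{-s}}` in `ZMod n → ℂ`. -/
noncomputable def Vsub (n : ℕ) (s : ℤ) : Submodule ℂ (ZMod n → ℂ) :=
  Submodule.span ℂ {chi n s, chi n (-s)}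

lemma chi_zero_eq (n : ℕ) : chi n 0 = fun _ => (1 : ℂ) := by
  funext x; simp [chi]

lemma omega_half (n : ℕ) (hpos : 0 < n) (heven : Even n) :
    dihedralOmega n ^ (n / 2) = (-1 : ℂ) := by
  obtain ⟨m, rfl⟩ := heven
  have hm : 0 < m := by omega
  have h2 : (m + m) / 2 = m := by omega
  rw [h2, dihedralOmega, ← Complex.exp_nat_mul]
  have hmc : (m : ℂ) ≠ 0 := Nat.cast_ne_zero.mpr hm.ne'
  have : (m : ℂ) * (2 * ↑Real.pi * Complex.I / (↑(m + m))) = Real.pi * Complex.I := by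
    have h3 : ((m + m : ℕ) : ℂ) = 2 * m := by push_cast; ring
    rw [h3, mul_div_assoc', div_eq_iff (mul_ne_zero two_ne_zero hmc)]
    ring
  rw [this, Complex.exp_pi_mul_I]

lemma chi_half (n : ℕ) (hpos : 0 < n) (heven : Even n) (x : ZMod n) :
    chi n ((n : ℤ) / 2) x = (-1 : ℂ) ^ x.val := by
  have hd : (2 : ℕ) ∣ n := heven.two_dvd
  have h : ((n : ℤ) / 2) = ((n / 2 : ℕ) : ℤ) := by
    obtain ⟨m, rfl⟩ := hd; push_cast; omega
  rw [chi, h]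
  have : (((n / 2 : ℕ) : ℤ)) * ((x.val : ℕ) : ℤ) = ((n / 2 * x.val : ℕ) : ℤ) := by push_cast; ring
  rw [this, zpow_natCast, pow_mul, omega_half n hpos heven]

lemma neg_one_pow_mod_two (k : ℕ) : ((-1 : ℂ)) ^ (k % 2) = (-1 : ℂ) ^ k := by
  conv_rhs => rw [← Nat.div_add_mod k 2]
  rw [pow_add, pow_mul]
  simp

lemma val_parity (n : ℕ) (hpos : 0 < n) (heven : Even n) (t x : ZMod n) :
    ((-1 : ℂ)) ^ (2 * t - x).val = (-1 : ℂ) ^ x.val := by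
  have hd : (2 : ℕ) ∣ n := heven.two_dvd
  haveI : NeZero n := ⟨hpos.ne'⟩
  set φ := ZMod.castHom hd (ZMod 2) with hφ
  have key : ∀ a : ZMod n, (-1 : ℂ) ^ a.val = (-1 : ℂ) ^ (φ a).val := by
    intro a
    have h1 : φ a = ((a.val : ℕ) : ZMod 2) := by
      rw [hφ, ZMod.castHom_apply, ← ZMod.natCast_val]
    rw [h1, ZMod.val_natCast, neg_one_pow_mod_two]
  rw [key (2 * t - x), key x]
  congr 1
  have h2 : φ (2 * t - x) = - φ x := by
    rw [map_sub, map_mul]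
    have : φ 2 = 0 := by
      rw [map_ofNat]
      decide
    rw [this, zero_mul, zero_sub]
  rw [h2]
  have : ∀ y : ZMod 2, -y = y := by decide
  rw [this]

/-- For `n` even, the fixed subspace of the regular representation of the
dihedral quandle `R_n` is the two-dimensional span of the constant function
`f_0` and the sign character `f_{n/2}`. -/
theorem fixed_subspace_even (n : ℕ) (hpos : 0 < n) (heven : Even n) :
    {f : ZMod n → ℂ | ∀ t : ZMod n, lam n t f = f}
        = ↑(Submodule.span ℂ {chi n 0, chi n ((n : ℤ) / 2)}) ∧
    Module.finrank ℂ (Submodule.span ℂ {chi n 0, chi n ((n : ℤ) / 2)}) = 2 := by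
  haveI : NeZero n := ⟨hpos.ne'⟩
  have hn2 : 2 ≤ n := by
    obtain ⟨m, rfl⟩ := heven; omega
  haveI : Fact (1 < n) := ⟨hn2⟩
  have hval1 : (1 : ZMod n).val = 1 := ZMod.val_one n
  constructor
  · ext f
    simp only [Set.mem_setOf_eq, SetLike.mem_coe]
    constructor
    · intro hf
      rw [Submodule.mem_span_pair]
      refine ⟨(f 0 + f 1) / 2, (f 0 - f 1) / 2, ?_⟩
      funext x
      simp only [Pi.add_apply, Pi.smul_apply, smul_eq_mul, chi_zero_eq,
        chi_half n hpos heven, mul_one]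
      have hfx : f x = if x.val % 2 = 0 then f 0 else f 1 := by
        rcases Nat.even_or_odd x.val with ⟨k, hk⟩ | ⟨k, hk⟩
        · have hx : x = 2 * (k : ZMod n) := by
            have : x = ((x.val : ℕ) : ZMod n) := (ZMod.natCast_rightInverse x).symm
            rw [this, hk]; push_cast; ring
          have := congrFun (hf (k : ZMod n)) 0
          simp only [lam, sub_zero] at this
          rw [if_pos (show x.val % 2 = 0 by omega)]
          rw [hx]; exact this
        · have hx : x = 2 * ((k : ZMod n) + 1) - 1 := by
            have : x = ((x.val : ℕ) : ZMod n) := (ZMod.natCast_rightInverse x).symm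
            rw [this, hk]; push_cast; ring
          have := congrFun (hf ((k : ZMod n) + 1)) 1
          simp only [lam] at this
          rw [if_neg (show ¬ x.val % 2 = 0 by omega)]
          rw [hx]; exact this
      rw [hfx]
      rcases Nat.even_or_odd x.val with h | h
      · rw [h.neg_one_pow, if_pos (Nat.even_iff.mp h)]; ring
      · rw [h.neg_one_pow, if_neg (by rw [Nat.odd_iff] at h; omega)]; ring
    · intro hf
      rw [Submodule.mem_span_pair] at hf
      obtain ⟨a, b, rfl⟩ := hf
      intro t
      funext x
      simp only [lam, Pi.add_apply, Pi.smul_apply, smul_eq_mul, chi_zero_eq,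
        chi_half n hpos heven, mul_one, val_parity n hpos heven]
  · have hrange : Set.range ![chi n 0, chi n ((n : ℤ) / 2)] = {chi n 0, chi n ((n : ℤ) / 2)} := by
      ext z; simp [Matrix.range_cons]; tauto
    rw [← hrange, finrank_span_eq_card, Fintype.card_fin]
    rw [linearIndependent_fin2]
    constructor
    · intro h
      have := congrFun h 0
      simp [chi_half n hpos heven] at this
    · intro a h
      have h0 := congrFun h 0
      have h1 := congrFun h 1
      simp [chi_half n hpos heven, chi_zero_eq, hval1] at h0 h1
      rw [h0] at h1
      norm_num at h1
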